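/- Let $(M^n, g)$ be a compact Riemannian manifold with boundary, and let $f$ be a first eigenfunction of the Robin problem ($\Delta_g f + n f = 0$, $\tan(\theta)\partial_\nu f + f = 0$) for which equality holds in the Reilly-formula estimate. Then $f$ satisfies $\nabla^2 f + f g = 0$ in $M$. -/
import Mathlib


open scoped BigOperators RealInnerProductSpace

/-- An abstract model of a compact Riemannian manifold `(M^n, g)` with (possibly empty)
boundary `Σ`, carrying the geometric data needed to state the theorems of the paper:
tangent spaces with inner products and orthonormal frames, the Hessian of functions,
the gradient, Ricci curvature, the geodesic distance, and along the boundary the outward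
normal derivative `∂_ν`, the second fundamental form, the mean curvature, the boundary
(intrinsic) gradient and Laplacian, and integration functionals over `M` and over `Σ`. -/
structure RiemannianScaffold (n : ℕ) : Type 1 where
  /-- underlying set of the manifold -/
  M : Type
  /-- topology of `M` -/
  [top : TopologicalSpace M]
  /-- geodesic distance of `g` -/
  dist : M → M → ℝ
  /-- the boundary `Σ ⊆ M` -/
  bdry : Set M
  /-- smoothness predicate for real functions on `M` -/
  Smooth : (M → ℝ) → Prop
  /-- tangent spaces -/
  T : M → Type
  [addgrp : ∀ p, AddCommGroup (T p)]
  [mod : ∀ p, Module ℝ (T p)]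
  /-- the Riemannian metric `g` on each tangent space -/
  inner : ∀ p, T p → T p → ℝ
  inner_symm : ∀ p v w, inner p v w = inner p w v
  inner_smul : ∀ p (a : ℝ) v w, inner p (a • v) w = a * inner p v w
  inner_add : ∀ p v w u, inner p (v + w) u = inner p v u + inner p w u
  /-- a `g`-orthonormal frame on each tangent space -/
  frame : ∀ p, Fin n → T p
  frame_orthonormal : ∀ p i j, inner p (frame p i) (frame p j) = if i = j then (1:ℝ) else 0
  frame_span : ∀ p (v : T p), v = ∑ i, inner p v (frame p i) • frame p i
  /-- the Hessian `∇²f` of a function -/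
  hess : (M → ℝ) → ∀ p, T p → T p → ℝ
  hess_symm : ∀ f p v w, hess f p v w = hess f p w v
  hess_smul : ∀ f p (a : ℝ) v w, hess f p (a • v) w = a * hess f p v w
  hess_add : ∀ f p v w u, hess f p (v + w) u = hess f p v u + hess f p w u
  /-- the gradient `∇f` -/
  grad : (M → ℝ) → ∀ p, T p
  /-- the Ricci curvature `Ric_g` -/
  ric : ∀ p, T p → T p → ℝ
  /-- outward normal derivative `∂_ν f` along the boundary -/
  dnu : (M → ℝ) → M → ℝ
  /-- second fundamental form `h_Σ` of the boundary w.r.t. the outward unit normal -/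
  sff : ∀ p, T p → T p → ℝ
  /-- mean curvature `H_Σ = tr h_Σ = div_g ν` of the boundary -/
  meanCurv : M → ℝ
  /-- intrinsic gradient `∇̄` of the induced metric on the boundary -/
  gradB : (M → ℝ) → ∀ p, T p
  /-- intrinsic Laplacian `Δ̄` of the induced metric on the boundary -/
  lapB : (M → ℝ) → M → ℝ
  /-- integration `∫_M · dv_g` -/
  intM : (M → ℝ) → ℝ
  /-- integration `∫_Σ · dσ` -/
  intB : (M → ℝ) → ℝ

namespace RiemannianScaffold

variable {n : ℕ} (R : RiemannianScaffold n)

/-- the Laplacian `Δ_g f = tr_g ∇²f` -/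
def lap (f : R.M → ℝ) (p : R.M) : ℝ := ∑ i, R.hess f p (R.frame p i) (R.frame p i)

/-- the squared norm `|∇²f|²` of the Hessian -/
def hessNormSq (f : R.M → ℝ) (p : R.M) : ℝ :=
  ∑ i, ∑ j, (R.hess f p (R.frame p i) (R.frame p j))^2

def Nonconstant (f : R.M → ℝ) : Prop := ∃ p q, f p ≠ f q

end RiemannianScaffold

/-- intrinsic (geodesic) distance on the unit sphere -/
noncomputable def sphereGeodesicDist {m : ℕ} (x y : EuclideanSpace ℝ (Fin m)) : ℝ :=
  Real.arccos ⟪x, y⟫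

/-- Let `(Mⁿ, g)` be a compact Riemannian manifold with boundary, and let `f` be a first
eigenfunction of the Robin problem (`Δ_g f + n f = 0`, `tan θ ∂_ν f + f = 0`) for which
equality holds in the Reilly-formula estimate — equality forces the pointwise equality
`|∇²f|² = (Δf)²/n` in the Cauchy–Schwarz step of the estimate.  Then `f` satisfies
`∇²f + f g = 0` in `M`. -/
theorem reilly_equality_obata {n : ℕ} (hn : 1 ≤ n) (θ : ℝ)
    (hθ : θ ∈ Set.Ioo 0 (Real.pi / 2)) (R : RiemannianScaffold n)
    (hcpt : @CompactSpace R.M R.top)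
    (f : R.M → ℝ) (hf : R.Smooth f)
    (heig : ∀ p, R.lap f p + (n : ℝ) * f p = 0)
    (hrobin : ∀ q ∈ R.bdry, Real.tan θ * R.dnu f q + f q = 0)
    (hequality : ∀ p, R.hessNormSq f p = (R.lap f p) ^ 2 / n) :
    ∀ p (v w : R.T p), R.hess f p v w + f p * R.inner p v w = 0 := by
  classical
  intro p v w
  letI := R.addgrp p
  letI := R.mod p
  have hn0 : (n : ℝ) ≠ 0 := Nat.cast_ne_zero.mpr (by omega)
  set c := f p with hc
  set e := R.frame p with he
  set a : Fin n → Fin n → ℝ := fun i j => R.hess f p (e i) (e j) with ha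
  have hL : ∑ i, a i i = -((n : ℝ) * c) := by
    have h := heig p
    unfold RiemannianScaffold.lap at h
    linarith
  have hsq : ∑ i, ∑ j, (a i j) ^ 2 = ((n : ℝ) * c) ^ 2 / n := by
    have h := hequality p
    unfold RiemannianScaffold.hessNormSq RiemannianScaffold.lap at h
    rw [show (∑ i, R.hess f p (R.frame p i) (R.frame p i)) = ∑ i, a i i from rfl, hL] at h
    simpa using h
  have key : ∀ i j, a i j = if i = j then -c else 0 := by
    have hzero : ∑ i, ∑ j, (a i j + c * (if i = j then (1:ℝ) else 0)) ^ 2 = 0 := by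
      have expand : ∀ i j : Fin n, (a i j + c * (if i = j then (1:ℝ) else 0)) ^ 2
          = (a i j) ^ 2 + 2 * c * (if i = j then a i j else 0)
            + c ^ 2 * (if i = j then (1:ℝ) else 0) := by
        intro i j; by_cases h : i = j <;> simp [h] <;> ring
      have hrow : ∀ i, ∑ j, (a i j + c * (if i = j then (1:ℝ) else 0)) ^ 2
          = (∑ j, (a i j) ^ 2) + 2 * c * a i i + c ^ 2 := by
        intro i
        simp_rw [expand, Finset.sum_add_distrib]
        congr 1
        · congr 1
          simp [Finset.sum_ite_eq]
        · simp [mul_ite, Finset.sum_ite_eq]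
      have h1 : ∑ i, ∑ j, (a i j + c * (if i = j then (1:ℝ) else 0)) ^ 2
          = (∑ i, ∑ j, (a i j) ^ 2) + 2 * c * (∑ i, a i i) + c ^ 2 * n := by
        simp_rw [hrow, Finset.sum_add_distrib, Finset.sum_const, Finset.card_univ,
          Fintype.card_fin, nsmul_eq_mul, Finset.mul_sum]
        ring
      rw [h1, hsq, hL]
      field_simp
      ring
    intro i j
    have hterm : (a i j + c * (if i = j then (1:ℝ) else 0)) ^ 2 = 0 := by
      have houter := (Finset.sum_eq_zero_iff_of_nonneg (fun i _ =>
        Finset.sum_nonneg (fun j _ => sq_nonneg _))).mp hzero i (Finset.mem_univ i)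
      exact (Finset.sum_eq_zero_iff_of_nonneg (fun j _ => sq_nonneg _)).mp
        houter j (Finset.mem_univ j)
    have := pow_eq_zero_iff (n := 2) (by norm_num) |>.mp hterm
    by_cases h : i = j <;> simp [h] at this ⊢ <;> linarith
  -- bilinear extension
  let Hr : R.T p → R.T p →ₗ[ℝ] ℝ := fun u =>
    { toFun := fun x => R.hess f p x u
      map_add' := fun x y => R.hess_add f p x y u
      map_smul' := fun r x => R.hess_smul f p r x u }
  let Ir : R.T p → R.T p →ₗ[ℝ] ℝ := fun u =>
    { toFun := fun x => R.inner p x u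
      map_add' := fun x y => R.inner_add p x y u
      map_smul' := fun r x => R.inner_smul p r x u }
  set α : Fin n → ℝ := fun i => R.inner p v (e i) with hα
  set β : Fin n → ℝ := fun i => R.inner p w (e i) with hβ
  have hv : v = ∑ i, α i • e i := R.frame_span p v
  have hw : w = ∑ i, β i • e i := R.frame_span p w
  have hHei : ∀ i, R.hess f p (e i) w = -c * β i := by
    intro i
    have : R.hess f p (e i) w = R.hess f p w (e i) := R.hess_symm f p (e i) w
    rw [this]
    calc R.hess f p w (e i) = Hr (e i) w := rfl
      _ = Hr (e i) (∑ j, β j • e j) := by rw [← hw]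
      _ = ∑ j, β j * a j i := by
          rw [map_sum]; congr 1; ext j; rw [map_smul]; simp [Hr, a, mul_comm]
      _ = -c * β i := by
          rw [Finset.sum_eq_single i]
          · rw [key i i]; simp [mul_comm]
          · intro j _ hji; rw [key j i]; simp [hji]
          · simp
  have hIei : ∀ i, R.inner p (e i) w = β i := by
    intro i
    rw [R.inner_symm p (e i) w]
  have hH : R.hess f p v w = -c * ∑ i, α i * β i := by
    calc R.hess f p v w = Hr w v := rfl
      _ = Hr w (∑ i, α i • e i) := by rw [← hv]
      _ = ∑ i, α i * R.hess f p (e i) w := by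
          rw [map_sum]; congr 1; ext i; rw [map_smul]; simp [Hr]
      _ = ∑ i, α i * (-c * β i) := by simp_rw [hHei]
      _ = -c * ∑ i, α i * β i := by rw [Finset.mul_sum]; congr 1; ext i; ring
  have hI : R.inner p v w = ∑ i, α i * β i := by
    calc R.inner p v w = Ir w v := rfl
      _ = Ir w (∑ i, α i • e i) := by rw [← hv]
      _ = ∑ i, α i * R.inner p (e i) w := by
          rw [map_sum]; congr 1; ext i; rw [map_smul]; simp [Ir]
      _ = ∑ i, α i * β i := by simp_rw [hIei]
  rw [hH, hI]
  ring
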